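/- Let v : [0,1] → ℝ be continuous on [0,1], continuously differentiable on [0,1) with v'(0) = 0, and satisfy (τ v'(τ))' = -Ha²·τ·(1 - v(τ)/(1 - α v(τ))) on (0,1), v(1) = 0. Assume α > 0, Ha² > 0, and 0 ≤ v(τ) < 1/(1 + α) on (0,1). Then v(τ) > 0 for all τ ∈ [0,1). -/

import Mathlib

/-!
The derivative `(τ v')'` is negative on `(0,1)`, because `v < 1/(1+α)` forces
`v/(1 - α v) < 1`. Hence `τ v'(τ)`, continuous on `[0,1)`, decreases strictly from its value
`0` at `τ = 0`, so `v' < 0` on `(0,1)`, and `v` decreases strictly to `v(1) = 0`.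
-/

open Set

lemma one_sub_div_one_sub_mul_pos {α x : ℝ} (hα : 0 ≤ α) (hx : x < 1 / (1 + α)) :
    0 < 1 - x / (1 - α * x) := by
  have hx' : x * (1 + α) < 1 := (lt_div_iff₀ (by linarith)).mp hx
  have hden : 0 < 1 - α * x := by rcases le_or_gt 0 x with h | h <;> nlinarith
  have : x / (1 - α * x) < 1 := (div_lt_one hden).mpr (by linarith)
  linarith

lemma strictAntiOn_of_hasDerivAt_neg {D : Set ℝ} (hD : Convex ℝ D) {f f' : ℝ → ℝ}
    (hf : ContinuousOn f D) (hf' : ∀ x ∈ interior D, HasDerivAt f (f' x) x)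
    (hf'₀ : ∀ x ∈ interior D, f' x < 0) : StrictAntiOn f D :=
  strictAntiOn_of_hasDerivWithinAt_neg hD hf (fun x hx => (hf' x hx).hasDerivWithinAt) hf'₀

lemma neg_of_hasDerivAt_id_mul_neg {w g' : ℝ → ℝ} {b : ℝ} (hw : ContinuousOn w (Ico 0 b))
    (hderiv : ∀ τ ∈ Ioo 0 b, HasDerivAt (fun s => s * w s) (g' τ) τ)
    (hneg : ∀ τ ∈ Ioo 0 b, g' τ < 0) : ∀ τ ∈ Ioo 0 b, w τ < 0 := by
  have hanti : StrictAntiOn (fun s => s * w s) (Ico 0 b) :=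
    strictAntiOn_of_hasDerivAt_neg (convex_Ico 0 b) (continuousOn_id.mul hw)
      (by simpa only [interior_Ico] using hderiv) (by simpa only [interior_Ico] using hneg)
  rintro τ ⟨h0, hb⟩
  have : τ * w τ < 0 * w 0 := hanti ⟨le_rfl, h0.trans hb⟩ ⟨h0.le, hb⟩ h0
  rw [zero_mul] at this
  exact neg_of_mul_neg_right this h0.le

theorem stmt_7_general (α Ha : ℝ) (v v' : ℝ → ℝ)
    (hα : 0 < α) (hHa : 0 < Ha ^ 2)
    (hc : ContinuousOn v (Set.Icc 0 1))
    (hd : ∀ τ ∈ Set.Ico (0 : ℝ) 1, HasDerivAt v (v' τ) τ)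
    (hv'c : ContinuousOn v' (Set.Ico 0 1))
    (hbc1 : v 1 = 0)
    (heq : ∀ τ ∈ Set.Ioo (0 : ℝ) 1,
      HasDerivAt (fun s => s * v' s) (-Ha ^ 2 * τ * (1 - v τ / (1 - α * v τ))) τ)
    (hbnd : ∀ τ ∈ Set.Ioo (0 : ℝ) 1, 0 ≤ v τ ∧ v τ < 1 / (1 + α)) :
    ∀ τ ∈ Set.Ico (0 : ℝ) 1, 0 < v τ := by
  have hrhs_neg : ∀ τ ∈ Ioo (0 : ℝ) 1, -Ha ^ 2 * τ * (1 - v τ / (1 - α * v τ)) < 0 :=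
    fun τ hτ => by
      have := mul_pos (mul_pos hHa hτ.1) (one_sub_div_one_sub_mul_pos hα.le (hbnd τ hτ).2)
      linarith
  have hv'_neg := neg_of_hasDerivAt_id_mul_neg hv'c heq hrhs_neg
  have hv_anti : StrictAntiOn v (Icc 0 1) :=
    strictAntiOn_of_hasDerivAt_neg (convex_Icc 0 1) hc
      (fun τ hτ => hd τ (Ioo_subset_Ico_self (by rwa [interior_Icc] at hτ)))
      (by simpa only [interior_Icc] using hv'_neg)
  rintro τ ⟨h0, h1⟩
  simpa only [hbc1] using hv_anti ⟨h0, h1.le⟩ (right_mem_Icc.mpr zero_le_one) h1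

theorem stmt_7 (α Ha : ℝ) (v v' : ℝ → ℝ)
    (hα : 0 < α) (hHa : 0 < Ha ^ 2)
    (hc : ContinuousOn v (Set.Icc 0 1))
    (hd : ∀ τ ∈ Set.Ico (0 : ℝ) 1, HasDerivAt v (v' τ) τ)
    (hv'c : ContinuousOn v' (Set.Ico 0 1))
    (hbc0 : v' 0 = 0) (hbc1 : v 1 = 0)
    (heq : ∀ τ ∈ Set.Ioo (0 : ℝ) 1,
      HasDerivAt (fun s => s * v' s) (-Ha ^ 2 * τ * (1 - v τ / (1 - α * v τ))) τ)
    (hbnd : ∀ τ ∈ Set.Ioo (0 : ℝ) 1, 0 ≤ v τ ∧ v τ < 1 / (1 + α)) :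
    ∀ τ ∈ Set.Ico (0 : ℝ) 1, 0 < v τ :=
  stmt_7_general α Ha v v' hα hHa hc hd hv'c hbc1 heq hbnd
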